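/- (Boundary-layer curve for nonlinear elastodynamics, equations (4.10)–(4.14).) Let σ : ℝ → ℝ be C¹ with σ'(v) > 0 for every v, and let v_∞, u_∞ ∈ ℝ. Suppose v, u : [0,∞) → ℝ are differentiable functions satisfying v'(y) = u_∞ − u(y) and u'(y) = σ(v_∞) − σ(v(y)) for all y ≥ 0, with v(y) → v_∞ and u(y) → u_∞ as y → ∞. Set v_B = v(0) and u_B = u(0). Then (u_B − u_∞)²/2 = ∫_{v_∞}^{v_B} ( σ(s) − σ(v_∞) ) ds; moreover v_B = v_∞ if and only if u_B = u_∞, and if v_B ≠ v_∞ then (u_∞ − u_B)(v_∞ − v_B) > 0, i.e. u_∞ = u_B + ( ∫_{v_∞}^{v_B} 2(σ(s) − σ(v_∞)) ds )^{1/2} when v_∞ > v_B and u_∞ = u_B − ( ∫_{v_∞}^{v_B} 2(σ(s) − σ(v_∞)) ds )^{1/2} when v_∞ < v_B. -/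

import Mathlib

/-!
Along a solution the energy `(u - u∞)²/2 - ∫_{v∞}^{v} (σ(s) - σ(v∞)) ds` has derivative zero
and tends to zero at infinity, so it vanishes at `y = 0`; this is the identity. Since `σ` is
strictly increasing, the potential `∫_{v∞}^{v} (σ(s) - σ(v∞)) ds` is positive for `v ≠ v∞`,
which gives `v_B = v∞ ↔ u_B = u∞`. For the sign, `(v - v∞)(u - u∞)` has derivative
`-(u - u∞)² - (v - v∞)(σ(v) - σ(v∞)) ≤ 0` and tends to zero, so it is nonnegative at `y = 0`.
-/

open Filter intervalIntegral Set Topology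

theorem le_of_hasDerivAt_nonpos_of_tendsto {f f' : ℝ → ℝ} {a L : ℝ}
    (hf : ∀ y, a ≤ y → HasDerivAt f (f' y) y) (hf' : ∀ y, a ≤ y → f' y ≤ 0)
    (hlim : Tendsto f atTop (𝓝 L)) : L ≤ f a := by
  have hanti : AntitoneOn f (Ici a) := by
    refine antitoneOn_of_hasDerivWithinAt_nonpos (f' := f') (convex_Ici a)
      (fun y hy => (hf y hy).continuousAt.continuousWithinAt) (fun y hy => ?_) (fun y hy => ?_)
    all_goals rw [interior_Ici] at hy
    · exact (hf y hy.le).hasDerivWithinAt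
    · exact hf' y hy.le
  refine le_of_tendsto hlim ?_
  filter_upwards [eventually_ge_atTop a] with y hy
  exact hanti self_mem_Ici hy hy

theorem eq_of_hasDerivAt_zero_of_tendsto {f : ℝ → ℝ} {a L : ℝ}
    (hf : ∀ y, a ≤ y → HasDerivAt f 0 y) (hlim : Tendsto f atTop (𝓝 L)) : f a = L := by
  have hle : L ≤ f a := le_of_hasDerivAt_nonpos_of_tendsto hf (fun _ _ => le_rfl) hlim
  have hge : -L ≤ -f a :=
    le_of_hasDerivAt_nonpos_of_tendsto (f := fun y => -f y)
      (fun y hy => by simpa using (hf y hy).fun_neg) (fun _ _ => le_rfl) hlim.neg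
  linarith

theorem StrictMono.integral_sub_apply_pos {f : ℝ → ℝ} (hf : StrictMono f) {c x : ℝ}
    (hx : x ≠ c) : 0 < ∫ s in c..x, (f s - f c) := by
  have hint : ∀ a b, IntervalIntegrable (fun s => f s - f c) MeasureTheory.volume a b :=
    fun a b => (hf.monotone.add_const (-f c)).intervalIntegrable
  rcases hx.lt_or_gt with hxc | hcx
  · rw [integral_symm, ← integral_neg]
    exact intervalIntegral_pos_of_pos_on (hint x c).neg
      (fun s hs => by simpa using hf hs.2) hxc
  · exact intervalIntegral_pos_of_pos_on (hint c x) (fun s hs => by simpa using hf hs.1) hcx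

structure IsBoundaryLayer (σ : ℝ → ℝ) (vinf uinf a : ℝ) (v u : ℝ → ℝ) : Prop where
  hasDerivAt_v : ∀ y, a ≤ y → HasDerivAt v (uinf - u y) y
  hasDerivAt_u : ∀ y, a ≤ y → HasDerivAt u (σ vinf - σ (v y)) y
  tendsto_v : Tendsto v atTop (𝓝 vinf)
  tendsto_u : Tendsto u atTop (𝓝 uinf)

namespace IsBoundaryLayer

variable {σ : ℝ → ℝ} {vinf uinf a : ℝ} {v u : ℝ → ℝ}

theorem energy_eq_integral (h : IsBoundaryLayer σ vinf uinf a v u) (hσ : Continuous σ) :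
    (u a - uinf) ^ 2 / 2 = ∫ s in vinf..v a, (σ s - σ vinf) := by
  set W : ℝ → ℝ := fun x => ∫ s in vinf..x, (σ s - σ vinf)
  have hW : ∀ x, HasDerivAt W (σ x - σ vinf) x := fun x =>
    ((hσ.sub continuous_const).integral_hasStrictDerivAt vinf x).hasDerivAt
  have hconst : ∀ y, a ≤ y → HasDerivAt (fun y => (u y - uinf) ^ 2 / 2 - W (v y)) 0 y := by
    intro y hy
    refine (((((h.hasDerivAt_u y hy).sub_const uinf).fun_pow 2).div_const 2).fun_sub
      ((hW (v y)).comp y (h.hasDerivAt_v y hy))).congr_deriv ?_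
    push_cast
    ring
  have hlim : Tendsto (fun y => (u y - uinf) ^ 2 / 2 - W (v y)) atTop (𝓝 0) := by
    simpa [W] using (((h.tendsto_u.sub_const uinf).pow 2).div_const 2).sub
      ((hW vinf).continuousAt.tendsto.comp h.tendsto_v)
  have := eq_of_hasDerivAt_zero_of_tendsto hconst hlim
  linarith

theorem sub_mul_sub_nonneg (h : IsBoundaryLayer σ vinf uinf a v u) (hσ : Monotone σ) :
    0 ≤ (v a - vinf) * (u a - uinf) := by
  refine le_of_hasDerivAt_nonpos_of_tendsto (f := fun y => (v y - vinf) * (u y - uinf))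
    (fun y hy => ((h.hasDerivAt_v y hy).sub_const vinf).fun_mul
      ((h.hasDerivAt_u y hy).sub_const uinf)) (fun y _ => ?_)
    (by simpa using (h.tendsto_v.sub_const vinf).mul (h.tendsto_u.sub_const uinf))
  have hmono := (monotone_id.monovary hσ).sub_mul_sub_nonneg vinf (v y)
  simp only [id] at hmono
  nlinarith [sq_nonneg (u y - uinf)]

end IsBoundaryLayer

theorem elastodynamics_boundary_layer_curve
    (σ : ℝ → ℝ) (hσ' : ∀ v, 0 < deriv σ v)
    (vinf uinf : ℝ) (v u : ℝ → ℝ)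
    (hv : ∀ y : ℝ, 0 ≤ y → HasDerivAt v (uinf - u y) y)
    (hu : ∀ y : ℝ, 0 ≤ y → HasDerivAt u (σ vinf - σ (v y)) y)
    (hvlim : Tendsto v atTop (nhds vinf))
    (hulim : Tendsto u atTop (nhds uinf)) :
    (u 0 - uinf) ^ 2 / 2 = ∫ s in vinf..(v 0), (σ s - σ vinf) ∧
    (v 0 = vinf ↔ u 0 = uinf) ∧
    (v 0 ≠ vinf → 0 < (uinf - u 0) * (vinf - v 0)) ∧
    (v 0 < vinf →
      uinf = u 0 + Real.sqrt (∫ s in vinf..(v 0), 2 * (σ s - σ vinf))) ∧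
    (vinf < v 0 →
      uinf = u 0 - Real.sqrt (∫ s in vinf..(v 0), 2 * (σ s - σ vinf))) := by
  have hσmono : StrictMono σ := strictMono_of_deriv_pos hσ'
  have hσcont : Continuous σ := continuous_iff_continuousAt.2 fun x =>
    (differentiableAt_of_deriv_ne_zero (hσ' x).ne').continuousAt
  have hbl : IsBoundaryLayer σ vinf uinf 0 v u := ⟨hv, hu, hvlim, hulim⟩
  have energy := hbl.energy_eq_integral hσcont
  have sign := hbl.sub_mul_sub_nonneg hσmono.monotone
  have hu_ne : v 0 ≠ vinf → u 0 ≠ uinf := fun hne heq => by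
    have := hσmono.integral_sub_apply_pos hne
    rw [← energy, heq, sub_self] at this
    norm_num at this
  have hprod : v 0 ≠ vinf → 0 < (uinf - u 0) * (vinf - v 0) := fun hne => by
    have := mul_ne_zero (sub_ne_zero.2 hne) (sub_ne_zero.2 (hu_ne hne))
    nlinarith [sign.lt_of_ne' this]
  have hsqrt : √(∫ s in vinf..(v 0), 2 * (σ s - σ vinf)) = |u 0 - uinf| := by
    rw [integral_const_mul, ← energy, ← Real.sqrt_sq_eq_abs]
    congr 1
    ring
  refine ⟨energy, ⟨fun h => ?_, fun h => by_contra fun hne => hu_ne hne h⟩, hprod,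
    fun h => ?_, fun h => ?_⟩
  · rw [h, integral_same] at energy
    nlinarith [sq_nonneg (u 0 - uinf)]
  · rw [hsqrt, abs_of_neg (by nlinarith [hprod h.ne])]
    ring
  · rw [hsqrt, abs_of_pos (by nlinarith [hprod h.ne'])]
    ring
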